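/- arXiv:2002.06266 — 4 statements merged into one kernel-verified Lean document; each statement's English description precedes it below -/
import Mathlib

section
/- For every t ∈ [0,T], the iterated ordinary integral J_n admits the decomposition J_n(t) = Σ_{k=1}^{n} (−1)^{k+1} J_{n−k}(t) (w(t)^k / k!) P_k(t) + Σ_{k=1}^{n} (−1)^{k} ∫_0^t J_{n−k}(s) (w(s)^k / k!) P_k'(s) ds. -/
/-!
Write `W_k = w^k / k!`, so that `W_k' = W_{k-1} v` almost everywhere. With
`A_k = ∫_0^t J_{n-k} W_{k-1} v P_k`, integrating the derivative of the product
`J_{n-k} W_k P_k` over `[0, t]` and using `J_{n-k}' = f_{n-k} J_{n-k-1} v` and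
`P_k f_{n-k} = P_{k+1}` gives `A_k + A_{k+1} = J_{n-k}(t) W_k(t) P_k(t) - ∫_0^t J_{n-k} W_k P_k'`,
with `A_1 = J_n(t)` and `A_{n+1} = 0`; the alternating sum of these identities telescopes.
Since `v` is only integrable, `w` and the `J_k` are merely absolutely continuous, so the product
rule is applied almost everywhere and integrated with the fundamental theorem of calculus for
absolutely continuous functions.
-/

open MeasureTheory Set

theorem AbsolutelyContinuousOnInterval.fun_pow {F : ℝ → ℝ} {a b : ℝ}
    (hF : AbsolutelyContinuousOnInterval F a b) (m : ℕ) :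
    AbsolutelyContinuousOnInterval (fun x => F x ^ m) a b := by
  induction m with
  | zero => simpa using (contDiffOn_const (c := (1 : ℝ))).absolutelyContinuousOnInterval
  | succ m ih => simpa only [pow_succ] using ih.fun_mul hF

structure IsAbsContPrimitive (F f : ℝ → ℝ) (a b : ℝ) : Prop where
  absolutelyContinuousOnInterval : AbsolutelyContinuousOnInterval F a b
  ae_hasDerivAt : ∀ᵐ x, x ∈ uIcc a b → HasDerivAt F (f x) x

namespace IsAbsContPrimitive

variable {F G H f g h : ℝ → ℝ} {a b : ℝ}

theorem continuousOn (hF : IsAbsContPrimitive F f a b) : ContinuousOn F (uIcc a b) :=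
  hF.absolutelyContinuousOnInterval.continuousOn

theorem ae_deriv_eq (hF : IsAbsContPrimitive F f a b) :
    ∀ᵐ x, x ∈ uIoc a b → deriv F x = f x := by
  filter_upwards [hF.ae_hasDerivAt] with x hx hxI using (hx (uIoc_subset_uIcc hxI)).deriv

theorem intervalIntegrable (hF : IsAbsContPrimitive F f a b) : IntervalIntegrable f volume a b :=
  hF.absolutelyContinuousOnInterval.intervalIntegrable_deriv.congr_ae <|
    (ae_restrict_iff' measurableSet_uIoc).2 hF.ae_deriv_eq

theorem integral_eq_sub (hF : IsAbsContPrimitive F f a b) : ∫ x in a..b, f x = F b - F a := by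
  rw [← hF.absolutelyContinuousOnInterval.integral_deriv_eq_sub]
  exact intervalIntegral.integral_congr_ae <| by
    filter_upwards [hF.ae_deriv_eq] with x hx hxI using (hx hxI).symm

theorem const (c : ℝ) : IsAbsContPrimitive (fun _ => c) 0 a b :=
  ⟨(contDiffOn_const (c := c)).absolutelyContinuousOnInterval,
    ae_of_all _ fun _ _ => hasDerivAt_const _ c⟩

theorem intervalIntegral (hf : IntervalIntegrable f volume a b) :
    IsAbsContPrimitive (fun x => ∫ t in a..x, f t) f a b :=
  ⟨hf.absolutelyContinuousOnInterval_intervalIntegral left_mem_uIcc, by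
    filter_upwards [hf.ae_hasDerivAt_integral] with x hx hxI using hx hxI a left_mem_uIcc⟩

theorem of_contDiffOn {d : ℝ} (hb : b ∈ Icc a d) (hF : ContDiffOn ℝ 1 F (Icc a d))
    (hf : ∀ x ∈ Icc a d, HasDerivWithinAt F (f x) (Icc a d) x) :
    IsAbsContPrimitive F f a b := by
  have hab := uIcc_of_le hb.1
  have hsub : Icc a b ⊆ Icc a d := Icc_subset_Icc_right hb.2
  refine ⟨(hF.mono (hab ▸ hsub)).absolutelyContinuousOnInterval, ?_⟩
  filter_upwards [(Ioo_ae_eq_Icc (a := a) (b := b)).symm.le] with x hx hxI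
  have hxI' : x ∈ Ioo a b := hx (hab ▸ hxI)
  exact (hf x (hsub (Ioo_subset_Icc_self hxI'))).hasDerivAt
    (Icc_mem_nhds hxI'.1 (hxI'.2.trans_le hb.2))

theorem mul (hF : IsAbsContPrimitive F f a b) (hG : IsAbsContPrimitive G g a b) :
    IsAbsContPrimitive (fun x => F x * G x) (fun x => f x * G x + F x * g x) a b :=
  ⟨hF.absolutelyContinuousOnInterval.fun_mul hG.absolutelyContinuousOnInterval, by
    filter_upwards [hF.ae_hasDerivAt, hG.ae_hasDerivAt] with x hFx hGx hx
    exact (hFx hx).mul (hGx hx)⟩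

theorem pow_div_factorial (hF : IsAbsContPrimitive F f a b) (k : ℕ) :
    IsAbsContPrimitive (fun x => F x ^ (k + 1) / (k + 1).factorial)
      (fun x => F x ^ k / k.factorial * f x) a b := by
  refine ⟨by simpa only [div_eq_inv_mul] using
    (hF.absolutelyContinuousOnInterval.fun_pow (k + 1)).const_mul _, ?_⟩
  filter_upwards [hF.ae_hasDerivAt] with x hFx hx
  refine (((hFx hx).pow (k + 1)).div_const _).congr_deriv ?_
  rw [Nat.factorial_succ]
  push_cast
  field_simp

theorem integral_deriv_mul_mul_eq_sub (hF : IsAbsContPrimitive F f a b)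
    (hG : IsAbsContPrimitive G g a b) (hH : IsAbsContPrimitive H h a b) :
    (∫ x in a..b, f x * G x * H x) + (∫ x in a..b, F x * g x * H x)
      + (∫ x in a..b, F x * G x * h x) = F b * G b * H b - F a * G a * H a := by
  have hGH := hG.continuousOn.mul hH.continuousOn
  have hFH := hF.continuousOn.mul hH.continuousOn
  have hFG := hF.continuousOn.mul hG.continuousOn
  have i₁ : IntervalIntegrable (fun x => f x * G x * H x) volume a b := by
    simpa only [mul_assoc, Pi.mul_apply] using hF.intervalIntegrable.mul_continuousOn hGH
  have i₂ : IntervalIntegrable (fun x => F x * g x * H x) volume a b := by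
    simpa only [mul_right_comm, Pi.mul_apply] using hG.intervalIntegrable.continuousOn_mul hFH
  have i₃ : IntervalIntegrable (fun x => F x * G x * h x) volume a b :=
    hH.intervalIntegrable.continuousOn_mul hFG
  rw [← intervalIntegral.integral_add i₁ i₂,
    ← intervalIntegral.integral_add (i₁.add i₂) i₃,
    ← ((hF.mul hG).mul hH).integral_eq_sub]
  simp only [add_mul]

end IsAbsContPrimitive

theorem Finset.sum_Icc_neg_one_pow_mul_add_succ {R : Type*} [CommRing R] (u : ℕ → R) (n : ℕ) :
    ∑ k ∈ Finset.Icc 1 n, (-1) ^ (k + 1) * (u k + u (k + 1))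
      = u 1 + (-1) ^ (n + 1) * u (n + 1) := by
  induction n with
  | zero => simp
  | succ n ih =>
    rw [Finset.sum_Icc_succ_top (by omega), ih]
    ring

def iteratedIntegralDeriv (f J : ℕ → ℝ → ℝ) (v : ℝ → ℝ) : ℕ → ℝ → ℝ
  | 0, _ => 0
  | j + 1, s => f (j + 1) s * J j s * v s

theorem isAbsContPrimitive_iteratedIntegral {n : ℕ} {f J : ℕ → ℝ → ℝ} {v : ℝ → ℝ}
    {a b : ℝ}
    (hJ0 : ∀ s, J 0 s = 1)
    (hJ : ∀ k, 1 ≤ k → k ≤ n → ∀ s, J k s = ∫ r in a..s, f k r * J (k - 1) r * v r)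
    (hf : ∀ k, 1 ≤ k → k ≤ n → ContinuousOn (f k) (uIcc a b))
    (hv : IntervalIntegrable v volume a b) :
    ∀ j ≤ n, IsAbsContPrimitive (J j) (iteratedIntegralDeriv f J v j) a b := by
  intro j
  induction j with
  | zero =>
    intro _
    rw [show J 0 = fun _ => 1 from funext hJ0]
    exact IsAbsContPrimitive.const 1
  | succ j ih =>
    intro hj
    have hint : IntervalIntegrable (fun r => f (j + 1) r * J j r * v r) volume a b :=
      hv.continuousOn_mul ((hf (j + 1) (by omega) hj).mul (ih (by omega)).continuousOn)
    rw [show J (j + 1) = _ from funext (hJ (j + 1) (by omega) hj)]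
    exact IsAbsContPrimitive.intervalIntegral hint

section Decomposition

variable {f J P P' : ℕ → ℝ → ℝ} {v w : ℝ → ℝ} {a b : ℝ}

local notation "D" => iteratedIntegralDeriv f J v

theorem integral_iteratedIntegralDeriv_succ_add (j m : ℕ) (hw : IsAbsContPrimitive w v a b)
    (hwa : w a = 0) (hJ : IsAbsContPrimitive (J j) (D j) a b)
    (hP : IsAbsContPrimitive (P (m + 1)) (P' (m + 1)) a b)
    (hPsucc : ∀ s, P (m + 1) s = P m s * f (j + 1) s) :
    (∫ s in a..b, D (j + 1) s * (w s ^ m / m.factorial) * P m s)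
      + (∫ s in a..b, D j s * (w s ^ (m + 1) / (m + 1).factorial) * P (m + 1) s)
      = J j b * (w b ^ (m + 1) / (m + 1).factorial) * P (m + 1) b
        - ∫ s in a..b, J j s * (w s ^ (m + 1) / (m + 1).factorial) * P' (m + 1) s := by
  have hparts := hJ.integral_deriv_mul_mul_eq_sub (hw.pow_div_factorial m) hP
  rw [hwa, zero_pow m.succ_ne_zero, zero_div, mul_zero, zero_mul, sub_zero] at hparts
  have hfirst : (∫ s in a..b, D (j + 1) s * (w s ^ m / m.factorial) * P m s)
      = ∫ s in a..b, J j s * (w s ^ m / m.factorial * v s) * P (m + 1) s := by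
    refine intervalIntegral.integral_congr fun s _ => ?_
    simp only [iteratedIntegralDeriv, hPsucc]
    ring
  linarith

theorem iteratedIntegral_eq_sum {n : ℕ} (hw : IsAbsContPrimitive w v a b)
    (hwa : w a = 0) (hJ : ∀ j ≤ n, IsAbsContPrimitive (J j) (D j) a b) (hJa : J n a = 0)
    (hP : ∀ k, 1 ≤ k → k ≤ n → IsAbsContPrimitive (P k) (P' k) a b)
    (hP0 : ∀ s, P 0 s = 1)
    (hPsucc : ∀ m < n, ∀ s, P (m + 1) s = P m s * f (n - m) s) :
    J n b = (∑ k ∈ Finset.Icc 1 n,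
        (-1 : ℝ) ^ (k + 1) * J (n - k) b * (w b ^ k / k.factorial) * P k b)
      + ∑ k ∈ Finset.Icc 1 n,
        (-1 : ℝ) ^ k * ∫ s in a..b, J (n - k) s * (w s ^ k / k.factorial) * P' k s := by
  -- `A k = ∫ D (n + 1 - k) W_{k-1} P_{k-1}` is the `A_k` of the proof idea for `1 ≤ k ≤ n`;
  -- written with `D` it also makes `A (n + 1) = 0` and `A 1 = J n b` immediate.
  set A : ℕ → ℝ := fun k =>
    ∫ s in a..b, D (n + 1 - k) s * (w s ^ (k - 1) / (k - 1).factorial) * P (k - 1) s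
  have hstep : ∀ k ∈ Finset.Icc 1 n, A k + A (k + 1)
      = J (n - k) b * (w b ^ k / k.factorial) * P k b
        - ∫ s in a..b, J (n - k) s * (w s ^ k / k.factorial) * P' k s := by
    intro k hk
    obtain ⟨m, rfl⟩ : ∃ m, k = m + 1 := ⟨k - 1, by grind⟩
    have hmn : m < n := (Finset.mem_Icc.1 hk).2
    have hnm : n - m = n - (m + 1) + 1 := by omega
    have := integral_iteratedIntegralDeriv_succ_add (n - (m + 1)) m hw hwa (hJ _ (by omega))
      (hP (m + 1) (by omega) hmn) (hnm ▸ hPsucc m hmn)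
    simpa only [A, Nat.add_sub_add_right, Nat.add_sub_cancel, hnm] using this
  have hA1 : A 1 = J n b := by
    simpa [A, hP0, hJa] using (hJ n le_rfl).integral_eq_sub
  have hAn : A (n + 1) = 0 := by
    simp [A, iteratedIntegralDeriv]
  calc J n b = A 1 + (-1) ^ (n + 1) * A (n + 1) := by rw [hAn, hA1, mul_zero, add_zero]
    _ = ∑ k ∈ Finset.Icc 1 n, (-1) ^ (k + 1) * (A k + A (k + 1)) :=
      (Finset.sum_Icc_neg_one_pow_mul_add_succ A n).symm
    _ = _ := by
      rw [← Finset.sum_add_distrib]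
      refine Finset.sum_congr rfl fun k hk => ?_
      rw [hstep k hk]
      ring

end Decomposition

theorem stmt0_general
    (T : ℝ) (n : ℕ) (hn : 1 ≤ n)
    (f : ℕ → ℝ → ℝ)
    (hf : ∀ i, 1 ≤ i → i ≤ n → ContDiffOn ℝ 1 (f i) (Set.Icc 0 T))
    (v : ℝ → ℝ) (hv : IntegrableOn v (Set.Icc 0 T))
    (w : ℝ → ℝ) (hw : ∀ t, w t = ∫ s in (0:ℝ)..t, v s)
    (J : ℕ → ℝ → ℝ)
    (hJ0 : ∀ t, J 0 t = 1)
    (hJ : ∀ k, 1 ≤ k → k ≤ n → ∀ t,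
      J k t = ∫ s in (0:ℝ)..t, f k s * J (k - 1) s * v s)
    (P : ℕ → ℝ → ℝ)
    (hP : ∀ k t, P k t = ∏ l ∈ Finset.Icc 1 k, f (n + 1 - l) t)
    (P' : ℕ → ℝ → ℝ)
    (hP' : ∀ k, 1 ≤ k → k ≤ n → ∀ t ∈ Set.Icc (0:ℝ) T,
      HasDerivWithinAt (P k) (P' k t) (Set.Icc 0 T) t) :
    ∀ t ∈ Set.Icc (0:ℝ) T,
      J n t
        = (∑ k ∈ Finset.Icc 1 n,
            (-1 : ℝ) ^ (k + 1) * J (n - k) t * (w t ^ k / (Nat.factorial k : ℝ))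
              * P k t)
        + ∑ k ∈ Finset.Icc 1 n,
            (-1 : ℝ) ^ k *
              ∫ s in (0:ℝ)..t,
                J (n - k) s * (w s ^ k / (Nat.factorial k : ℝ)) * P' k s := by
  intro t ht
  have hsub : uIcc 0 t ⊆ Icc 0 T := by
    rw [uIcc_of_le ht.1]
    exact Icc_subset_Icc_right ht.2
  have hwt : IsAbsContPrimitive w v 0 t := by
    rw [show w = _ from funext hw]
    exact .intervalIntegral (hv.mono_set hsub).intervalIntegrable
  have hJt := isAbsContPrimitive_iteratedIntegral hJ0 hJ
    (fun k hk hkn => (hf k hk hkn).continuousOn.mono hsub) hwt.intervalIntegrable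
  have hPt : ∀ k, 1 ≤ k → k ≤ n → IsAbsContPrimitive (P k) (P' k) 0 t := by
    intro k hk hkn
    refine .of_contDiffOn ht ?_ (hP' k hk hkn)
    rw [show P k = _ from funext (hP k)]
    exact contDiffOn_prod fun l hl => hf _ (by grind) (by grind)
  refine iteratedIntegral_eq_sum hwt (by simp [hw]) hJt (by simp [hJ n hn le_rfl]) hPt
    (fun s => by simp [hP]) fun m hm s => ?_
  rw [hP, hP, Finset.prod_Icc_succ_top (by omega), Nat.add_sub_add_right]

/-- Lemma 4.1 of the paper (pathwise): decomposition of the iterated ordinary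
integral `J n` in terms of `J (n-k)`, powers of `w`, and the products
`P k = ∏_{l=1}^k f_{n+1-l}` and their derivatives. -/
theorem stmt0
    (T : ℝ) (hT : 0 < T) (n : ℕ) (hn : 1 ≤ n)
    (f : ℕ → ℝ → ℝ)
    (hf : ∀ i, 1 ≤ i → i ≤ n → ContDiffOn ℝ 1 (f i) (Set.Icc 0 T))
    (v : ℝ → ℝ) (hv : IntegrableOn v (Set.Icc 0 T))
    (w : ℝ → ℝ) (hw : ∀ t, w t = ∫ s in (0:ℝ)..t, v s)
    (J : ℕ → ℝ → ℝ)
    (hJ0 : ∀ t, J 0 t = 1)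
    (hJ : ∀ k, 1 ≤ k → k ≤ n → ∀ t,
      J k t = ∫ s in (0:ℝ)..t, f k s * J (k - 1) s * v s)
    (P : ℕ → ℝ → ℝ)
    (hP : ∀ k t, P k t = ∏ l ∈ Finset.Icc 1 k, f (n + 1 - l) t)
    (P' : ℕ → ℝ → ℝ)
    (hP' : ∀ k, 1 ≤ k → k ≤ n → ∀ t ∈ Set.Icc (0:ℝ) T,
      HasDerivWithinAt (P k) (P' k t) (Set.Icc 0 T) t) :
    ∀ t ∈ Set.Icc (0:ℝ) T,
      J n t
        = (∑ k ∈ Finset.Icc 1 n,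
            (-1 : ℝ) ^ (k + 1) * J (n - k) t * (w t ^ k / (Nat.factorial k : ℝ))
              * P k t)
        + ∑ k ∈ Finset.Icc 1 n,
            (-1 : ℝ) ^ k *
              ∫ s in (0:ℝ)..t,
                J (n - k) s * (w s ^ k / (Nat.factorial k : ℝ)) * P' k s :=
  stmt0_general T n hn f hf v hv w hw J hJ0 hJ P hP P' hP'
end

section
/- Define H_k(t) = ∫_0^t (w(s)^k / k!) P_k(s) f_{n−k}(s) J_{n−k−1}(s) v(s) ds for 1 ≤ k ≤ n−1, and set H_n(t) = 0. Then for every k with 1 ≤ k ≤ n−1 and every t ∈ [0,T], H_k(t) = J_{n−k−1}(t) (w(t)^{k+1} / (k+1)!) P_{k+1}(t) − ∫_0^t J_{n−k−1}(s) (w(s)^{k+1} / (k+1)!) P_{k+1}'(s) ds − H_{k+1}(t). -/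
/-!
Write `W j = w ^ j / j!`, so that `W (k + 1)` has derivative `W k * v` almost everywhere, and
`J (n - k - 1)` has derivative `f (n - k - 1) * J (n - k - 2) * v` almost everywhere (or `0` when
`k + 1 = n`). Since `P (k + 1) = P k * f (n - k)`, the identity is integration by parts on `[0, t]`
between the absolutely continuous functions `J (n - k - 1) * W (k + 1)` and `P (k + 1)`; the
boundary term at `0` vanishes because `w 0 = 0`.
-/

open MeasureTheory Set
open scoped Nat

namespace AbsolutelyContinuousOnInterval

variable {f g f' g' : ℝ → ℝ} {a b : ℝ}

theorem pow (hf : AbsolutelyContinuousOnInterval f a b) :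
    ∀ k : ℕ, AbsolutelyContinuousOnInterval (fun x => f x ^ k) a b
  | 0 => by simpa using (contDiffOn_const (c := (1 : ℝ))).absolutelyContinuousOnInterval
  | k + 1 => by simpa only [pow_succ] using (hf.pow k).fun_mul hf

theorem intervalIntegrable_of_ae_hasDerivAt (hf : AbsolutelyContinuousOnInterval f a b)
    (hf' : ∀ᵐ x, x ∈ uIcc a b → HasDerivAt f (f' x) x) :
    IntervalIntegrable f' volume a b := by
  refine hf.intervalIntegrable_deriv.congr_ae ?_
  rw [Filter.EventuallyEq, ae_restrict_iff' measurableSet_uIoc]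
  filter_upwards [hf'] with x hx hxI
  exact (hx (uIoc_subset_uIcc hxI)).deriv

theorem integral_mul_add_mul_eq_sub_of_ae_hasDerivAt (hf : AbsolutelyContinuousOnInterval f a b)
    (hg : AbsolutelyContinuousOnInterval g a b)
    (hf' : ∀ᵐ x, x ∈ uIcc a b → HasDerivAt f (f' x) x)
    (hg' : ∀ᵐ x, x ∈ uIcc a b → HasDerivAt g (g' x) x) :
    ∫ x in a..b, f' x * g x + f x * g' x = f b * g b - f a * g a := by
  rw [← hf.integral_deriv_mul_eq_sub hg]
  refine intervalIntegral.integral_congr_ae ?_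
  filter_upwards [hf', hg'] with x hfx hgx hx
  rw [(hfx (uIoc_subset_uIcc hx)).deriv, (hgx (uIoc_subset_uIcc hx)).deriv]

end AbsolutelyContinuousOnInterval

theorem ae_hasDerivAt_of_hasDerivWithinAt {f f' : ℝ → ℝ} {s : Set ℝ} {a b : ℝ}
    (hs : uIcc a b ⊆ s) (hf : ∀ x ∈ s, HasDerivWithinAt f (f' x) s x) :
    ∀ᵐ x, x ∈ uIcc a b → HasDerivAt f (f' x) x := by
  filter_upwards [(Ioo_ae_eq_Icc (a := min a b) (b := max a b) (μ := volume))] with x hx hxI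
  have hxI' : x ∈ Ioo (min a b) (max a b) := hx.mpr hxI
  exact (hf x (hs hxI)).hasDerivAt
    (Filter.mem_of_superset (Ioo_mem_nhds hxI'.1 hxI'.2) (Ioo_subset_Icc_self.trans hs))

theorem HasDerivAt.pow_div_factorial {w : ℝ → ℝ} {w' x : ℝ} (hw : HasDerivAt w w' x) (k : ℕ) :
    HasDerivAt (fun y => w y ^ (k + 1) / (k + 1)!) (w x ^ k / k ! * w') x := by
  refine ((hw.pow (k + 1)).div_const ((k + 1)! : ℝ)).congr_deriv ?_
  rw [Nat.factorial_succ]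
  push_cast
  field_simp

theorem integral_pow_div_factorial_mul_eq {v w J J' Q Q' : ℝ → ℝ} {a b : ℝ} (k : ℕ)
    (hv : IntervalIntegrable v volume a b) (hw : ∀ x, w x = ∫ s in a..x, v s)
    (hJ : AbsolutelyContinuousOnInterval J a b)
    (hJJ' : ∀ᵐ x, x ∈ uIcc a b → HasDerivAt J (J' x) x)
    (hQ : AbsolutelyContinuousOnInterval Q a b)
    (hQQ' : ∀ᵐ x, x ∈ uIcc a b → HasDerivAt Q (Q' x) x) :
    ∫ x in a..b, w x ^ k / k ! * Q x * J x * v x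
      = J b * (w b ^ (k + 1) / (k + 1)!) * Q b
        - (∫ x in a..b, J x * (w x ^ (k + 1) / (k + 1)!) * Q' x)
        - ∫ x in a..b, w x ^ (k + 1) / (k + 1)! * Q x * J' x := by
  have hw_eq : w = fun x => ∫ s in a..x, v s := funext hw
  have hw_ac : AbsolutelyContinuousOnInterval w a b :=
    hw_eq ▸ hv.absolutelyContinuousOnInterval_intervalIntegral left_mem_uIcc
  have hww' : ∀ᵐ x, x ∈ uIcc a b → HasDerivAt w (v x) x := by
    filter_upwards [hv.ae_hasDerivAt_integral] with x hx hxI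
    exact hw_eq ▸ hx hxI a left_mem_uIcc
  set W : ℝ → ℝ := fun x => w x ^ (k + 1) / (k + 1)!
  have hW_ac : AbsolutelyContinuousOnInterval W a b := by
    simpa only [W, div_eq_inv_mul] using (hw_ac.pow (k + 1)).const_mul ((k + 1)! : ℝ)⁻¹
  have hJW' : ∀ᵐ x, x ∈ uIcc a b →
      HasDerivAt (fun y => J y * W y) (J' x * W x + J x * (w x ^ k / k ! * v x)) x := by
    filter_upwards [hJJ', hww'] with x hJx hwx hxI
    exact (hJx hxI).mul ((hwx hxI).pow_div_factorial k)
  have hparts := (hJ.fun_mul hW_ac).integral_mul_add_mul_eq_sub_of_ae_hasDerivAt hQ hJW' hQQ'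
  have hWa : W a = 0 := by simp [W, hw a]
  have hwc := hw_ac.continuousOn
  have hWc := hW_ac.continuousOn
  have hJc := hJ.continuousOn
  have hQc := hQ.continuousOn
  have h₁ : IntervalIntegrable (fun x => W x * Q x * J' x) volume a b :=
    (hJ.intervalIntegrable_of_ae_hasDerivAt hJJ').continuousOn_mul (hWc.mul hQc)
  have h₂ : IntervalIntegrable (fun x => w x ^ k / k ! * Q x * J x * v x) volume a b :=
    hv.continuousOn_mul ((((hwc.pow k).div_const (k ! : ℝ)).mul hQc).mul hJc)
  have h₃ : IntervalIntegrable (fun x => J x * W x * Q' x) volume a b :=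
    (hQ.intervalIntegrable_of_ae_hasDerivAt hQQ').continuousOn_mul (hJc.mul hWc)
  have hsplit : ∫ x in a..b, (J' x * W x + J x * (w x ^ k / k ! * v x)) * Q x + J x * W x * Q' x
      = (∫ x in a..b, W x * Q x * J' x) + (∫ x in a..b, w x ^ k / k ! * Q x * J x * v x)
        + ∫ x in a..b, J x * W x * Q' x := by
    rw [← intervalIntegral.integral_add h₁ h₂, ← intervalIntegral.integral_add (h₁.add h₂) h₃]
    congr 1 with x
    ring
  rw [hsplit, hWa, mul_zero, zero_mul, sub_zero] at hparts
  linarith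

section IteratedIntegral

variable {n : ℕ} {b : ℝ} {f J : ℕ → ℝ → ℝ} {v : ℝ → ℝ}

theorem absolutelyContinuousOnInterval_iteratedIntegral
    (hf : ∀ i, 1 ≤ i → i ≤ n → ContinuousOn (f i) (uIcc 0 b))
    (hv : IntervalIntegrable v volume 0 b) (hJ0 : ∀ t, J 0 t = 1)
    (hJ : ∀ k, 1 ≤ k → k ≤ n → ∀ t, J k t = ∫ s in (0:ℝ)..t, f k s * J (k - 1) s * v s) :
    ∀ j ≤ n, AbsolutelyContinuousOnInterval (J j) 0 b
  | 0, _ => funext hJ0 ▸ contDiffOn_const.absolutelyContinuousOnInterval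
  | j + 1, hj => funext (hJ (j + 1) (by omega) hj) ▸
      (hv.continuousOn_mul ((hf (j + 1) (by omega) hj).mul
        (absolutelyContinuousOnInterval_iteratedIntegral hf hv hJ0 hJ j (by omega)).continuousOn)
        ).absolutelyContinuousOnInterval_intervalIntegral left_mem_uIcc

theorem ae_hasDerivAt_iteratedIntegral
    (hf : ∀ i, 1 ≤ i → i ≤ n → ContinuousOn (f i) (uIcc 0 b))
    (hv : IntervalIntegrable v volume 0 b) (hJ0 : ∀ t, J 0 t = 1)
    (hJ : ∀ k, 1 ≤ k → k ≤ n → ∀ t, J k t = ∫ s in (0:ℝ)..t, f k s * J (k - 1) s * v s)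
    {j : ℕ} (hj : 1 ≤ j) (hjn : j ≤ n) :
    ∀ᵐ x, x ∈ uIcc 0 b → HasDerivAt (J j) (f j x * J (j - 1) x * v x) x := by
  have hint := hv.continuousOn_mul ((hf j hj hjn).mul
    (absolutelyContinuousOnInterval_iteratedIntegral hf hv hJ0 hJ (j - 1) (by omega)).continuousOn)
  filter_upwards [hint.ae_hasDerivAt_integral] with x hx hxI
  exact funext (hJ j hj hjn) ▸ hx hxI 0 left_mem_uIcc

end IteratedIntegral

theorem stmt3_general
    (T : ℝ) (n : ℕ)
    (f : ℕ → ℝ → ℝ)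
    (hf : ∀ i, 1 ≤ i → i ≤ n → ContDiffOn ℝ 1 (f i) (Set.Icc 0 T))
    (v : ℝ → ℝ) (hv : IntegrableOn v (Set.Icc 0 T))
    (w : ℝ → ℝ) (hw : ∀ t, w t = ∫ s in (0:ℝ)..t, v s)
    (J : ℕ → ℝ → ℝ)
    (hJ0 : ∀ t, J 0 t = 1)
    (hJ : ∀ k, 1 ≤ k → k ≤ n → ∀ t,
      J k t = ∫ s in (0:ℝ)..t, f k s * J (k - 1) s * v s)
    (P : ℕ → ℝ → ℝ)
    (hP : ∀ k t, P k t = ∏ l ∈ Finset.Icc 1 k, f (n + 1 - l) t)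
    (P' : ℕ → ℝ → ℝ)
    (hP' : ∀ k, 1 ≤ k → k ≤ n → ∀ t ∈ Set.Icc (0:ℝ) T,
      HasDerivWithinAt (P k) (P' k t) (Set.Icc 0 T) t)
    (H : ℕ → ℝ → ℝ)
    (hH : ∀ k, 1 ≤ k → k + 1 ≤ n → ∀ t,
      H k t = ∫ s in (0:ℝ)..t,
        (w s ^ k / (Nat.factorial k : ℝ)) * P k s
          * (f (n - k) s * J (n - k - 1) s * v s))
    (hHn : ∀ t, H n t = 0) :
    ∀ k, 1 ≤ k → k + 1 ≤ n → ∀ t ∈ Set.Icc (0:ℝ) T,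
      H k t
        = J (n - k - 1) t * (w t ^ (k + 1) / (Nat.factorial (k + 1) : ℝ))
            * P (k + 1) t
          - (∫ s in (0:ℝ)..t,
              J (n - k - 1) s * (w s ^ (k + 1) / (Nat.factorial (k + 1) : ℝ))
                * P' (k + 1) s)
          - H (k + 1) t := by
  intro k hk hkn t ht
  have hsub : uIcc 0 t ⊆ Icc 0 T := by rw [uIcc_of_le ht.1]; exact Icc_subset_Icc_right ht.2
  have hvt : IntervalIntegrable v volume 0 t := (hv.mono_set hsub).intervalIntegrable
  have hft i (hi : 1 ≤ i) (hin : i ≤ n) : ContinuousOn (f i) (uIcc 0 t) :=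
    (hf i hi hin).continuousOn.mono hsub
  have hP_succ x : P (k + 1) x = P k x * f (n - k) x := by
    rw [hP, hP, Finset.prod_Icc_succ_top (by omega), show n + 1 - (k + 1) = n - k by omega]
  have hP_ac : AbsolutelyContinuousOnInterval (P (k + 1)) 0 t := by
    refine ContDiffOn.absolutelyContinuousOnInterval ?_
    rw [funext (hP (k + 1))]
    exact contDiffOn_prod fun l hl => (hf _ (by grind) (by grind)).mono hsub
  obtain ⟨J', hJJ', hH'⟩ : ∃ J' : ℝ → ℝ,
      (∀ᵐ x, x ∈ uIcc 0 t → HasDerivAt (J (n - k - 1)) (J' x) x) ∧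
      H (k + 1) t = ∫ x in 0..t, w x ^ (k + 1) / (k + 1)! * P (k + 1) x * J' x := by
    obtain hm | hm := (n - k - 1).eq_zero_or_pos
    · refine ⟨0, ae_of_all _ fun x _ => ?_, ?_⟩
      · simpa [hm, funext hJ0] using hasDerivAt_const x (1 : ℝ)
      · simp [show k + 1 = n by omega, hHn]
    · refine ⟨_, ae_hasDerivAt_iteratedIntegral hft hvt hJ0 hJ hm (by omega), ?_⟩
      rw [hH (k + 1) (by omega) (by omega), show n - (k + 1) = n - k - 1 by omega]
  rw [hH k hk hkn, hH', ← integral_pow_div_factorial_mul_eq k hvt hw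
    (absolutelyContinuousOnInterval_iteratedIntegral hft hvt hJ0 hJ _ (by omega)) hJJ' hP_ac
    (ae_hasDerivAt_of_hasDerivWithinAt hsub (hP' (k + 1) (by omega) hkn))]
  congr 1 with x
  rw [hP_succ]
  ring

/-- Iteration step in the proof of Lemma 4.1 for the auxiliary integrals
`H k (t) = ∫₀ᵗ (w s)^k/k! · P k s · f_{n-k}(s) J_{n-k-1}(s) v(s) ds` (with
`H n = 0`):
`H k t = J (n-k-1) t · w t^(k+1)/(k+1)! · P (k+1) t
          - ∫₀ᵗ J (n-k-1) s · w s^(k+1)/(k+1)! · P' (k+1) s ds - H (k+1) t`. -/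
theorem stmt3
    (T : ℝ) (hT : 0 < T) (n : ℕ) (hn : 2 ≤ n)
    (f : ℕ → ℝ → ℝ)
    (hf : ∀ i, 1 ≤ i → i ≤ n → ContDiffOn ℝ 1 (f i) (Set.Icc 0 T))
    (v : ℝ → ℝ) (hv : IntegrableOn v (Set.Icc 0 T))
    (w : ℝ → ℝ) (hw : ∀ t, w t = ∫ s in (0:ℝ)..t, v s)
    (J : ℕ → ℝ → ℝ)
    (hJ0 : ∀ t, J 0 t = 1)
    (hJ : ∀ k, 1 ≤ k → k ≤ n → ∀ t,
      J k t = ∫ s in (0:ℝ)..t, f k s * J (k - 1) s * v s)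
    (P : ℕ → ℝ → ℝ)
    (hP : ∀ k t, P k t = ∏ l ∈ Finset.Icc 1 k, f (n + 1 - l) t)
    (P' : ℕ → ℝ → ℝ)
    (hP' : ∀ k, 1 ≤ k → k ≤ n → ∀ t ∈ Set.Icc (0:ℝ) T,
      HasDerivWithinAt (P k) (P' k t) (Set.Icc 0 T) t)
    (H : ℕ → ℝ → ℝ)
    (hH : ∀ k, 1 ≤ k → k + 1 ≤ n → ∀ t,
      H k t = ∫ s in (0:ℝ)..t,
        (w s ^ k / (Nat.factorial k : ℝ)) * P k s
          * (f (n - k) s * J (n - k - 1) s * v s))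
    (hHn : ∀ t, H n t = 0) :
    ∀ k, 1 ≤ k → k + 1 ≤ n → ∀ t ∈ Set.Icc (0:ℝ) T,
      H k t
        = J (n - k - 1) t * (w t ^ (k + 1) / (Nat.factorial (k + 1) : ℝ))
            * P (k + 1) t
          - (∫ s in (0:ℝ)..t,
              J (n - k - 1) s * (w s ^ (k + 1) / (Nat.factorial (k + 1) : ℝ))
                * P' (k + 1) s)
          - H (k + 1) t :=
  stmt3_general T n f hf v hv w hw J hJ0 hJ P hP P' hP' H hH hHn
end

section
/- Let (w_j)_{j≥1} and w be continuous real-valued functions on [0,T] such that sup_{t∈[0,T]} |w_j(t) − w(t)| → 0 as j → ∞. Then sup_{t∈[0,T]} |Φ_n[w_j](t) − Φ_n[w](t)| → 0 as j → ∞. -/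
/-!
By strong induction on `j`, `Φ_j[u]` is obtained from `u` and `Φ_0[u], …, Φ_{j-1}[u]` by
finitely many pointwise products with the fixed continuous functions `∏ f_{j+1-l}` and their
derivatives, powers, sums and primitives `t ↦ ∫_0^t`. On the compact interval `[0,T]` each of
these operations preserves continuity and maps uniformly convergent sequences of continuous
functions to uniformly convergent ones (products because all functions involved are bounded,
primitives because `|∫_0^t (g - h)| ≤ T ‖g - h‖_∞`).
-/

open MeasureTheory Filter Set

section UniformAlgebra

variable {ι α : Type*} {l : Filter ι}

theorem tendstoUniformlyOn_const {β : Type*} [UniformSpace β] {s : Set α} (f : α → β) :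
    TendstoUniformlyOn (fun _ : ι => f) f l s :=
  fun _ hu => Eventually.of_forall fun _ _ _ => refl_mem_uniformity hu

theorem tendstoUniformlyOn_finsetSum {β κ : Type*} [UniformSpace β] [AddCommGroup β]
    [IsUniformAddGroup β] {s : Set α} {F : κ → ι → α → β} {f : κ → α → β} (K : Finset κ)
    (h : ∀ k ∈ K, TendstoUniformlyOn (F k) (f k) l s) :
    TendstoUniformlyOn (fun i x => ∑ k ∈ K, F k i x) (fun x => ∑ k ∈ K, f k x) l s := by
  classical
  induction K using Finset.induction_on with
  | empty => simpa using tendstoUniformlyOn_const (fun _ : α => (0 : β))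
  | insert a K ha ih =>
    simp only [Finset.sum_insert ha]
    exact (h a (Finset.mem_insert_self a K)).fun_add
      (ih fun k hk => h k (Finset.mem_insert_of_mem hk))

theorem TendstoUniformlyOn.const_mul {M : Type*} [Mul M] [UniformSpace M]
    [UniformContinuousConstSMul M M] {s : Set α} {F : ι → α → M} {f : α → M}
    (hF : TendstoUniformlyOn F f l s) (c : M) :
    TendstoUniformlyOn (fun i x => c * F i x) (fun x => c * f x) l s :=
  (uniformContinuous_const_smul c).comp_tendstoUniformlyOn hF

variable [TopologicalSpace α] {s : Set α}

theorem TendstoUniformlyOn.mul_of_continuousOn {M : Type*} [PseudoMetricSpace M] [Zero M] [Mul M]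
    [IsBoundedSMul M M] {F G : ι → α → M} {f g : α → M} (hs : IsCompact s)
    (hF : TendstoUniformlyOn F f l s) (hG : TendstoUniformlyOn G g l s)
    (hf : ContinuousOn f s) (hg : ContinuousOn g s) :
    TendstoUniformlyOn (fun i x => F i x * G i x) (fun x => f x * g x) l s :=
  (tendstoLocallyUniformlyOn_iff_tendstoUniformlyOn_of_compact hs).1 <|
    hF.tendstoLocallyUniformlyOn.fun_mul₀ hG.tendstoLocallyUniformlyOn hf hg

theorem TendstoUniformlyOn.pow_of_continuousOn {M : Type*} [SeminormedRing M]
    {F : ι → α → M} {f : α → M} (hs : IsCompact s) (hF : TendstoUniformlyOn F f l s)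
    (hf : ContinuousOn f s) (k : ℕ) :
    TendstoUniformlyOn (fun i x => F i x ^ k) (fun x => f x ^ k) l s := by
  induction k with
  | zero => simpa using tendstoUniformlyOn_const (fun _ : α => (1 : M))
  | succ k ih => simpa only [pow_succ] using ih.mul_of_continuousOn hs hF (hf.pow k) hf

end UniformAlgebra

section Primitive

variable {E : Type*} [NormedAddCommGroup E] [NormedSpace ℝ E] {a b : ℝ}

theorem ContinuousOn.continuousOn_primitive {g : ℝ → E} (hg : ContinuousOn g (Icc a b)) :
    ContinuousOn (fun t => ∫ s in a..t, g s) (Icc a b) := by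
  rcases le_or_gt a b with hab | hab
  · rw [← uIcc_of_le hab] at hg ⊢
    exact intervalIntegral.continuousOn_primitive_interval hg.integrableOn_uIcc
  · simp [Icc_eq_empty_of_lt hab]

theorem TendstoUniformlyOn.primitive {ι : Type*} {l : Filter ι} {G : ι → ℝ → E} {g : ℝ → E}
    (hG : ∀ i, IntegrableOn (G i) (Icc a b)) (hg : IntegrableOn g (Icc a b))
    (h : TendstoUniformlyOn G g l (Icc a b)) :
    TendstoUniformlyOn (fun i t => ∫ s in a..t, G i s) (fun t => ∫ s in a..t, g s) l
      (Icc a b) := by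
  rw [Metric.tendstoUniformlyOn_iff] at h ⊢
  intro ε hε
  set δ := ε / (|b - a| + 1)
  have hδ : 0 < δ := by positivity
  filter_upwards [h δ hδ] with i hi t ht
  have hsub : uIcc a t ⊆ Icc a b := by
    rw [uIcc_of_le ht.1]; exact Icc_subset_Icc_right ht.2
  have hbound : ∀ x ∈ uIoc a t, ‖g x - G i x‖ ≤ δ := fun x hx =>
    (dist_eq_norm (g x) (G i x) ▸ hi x (hsub (uIoc_subset_uIcc hx))).le
  have hta : |t - a| ≤ |b - a| := by
    rw [abs_of_nonneg (sub_nonneg.2 ht.1), abs_of_nonneg (by linarith [ht.1, ht.2])]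
    linarith [ht.2]
  calc dist (∫ s in a..t, g s) (∫ s in a..t, G i s)
      = ‖∫ s in a..t, (g s - G i s)‖ := by
        rw [dist_eq_norm, intervalIntegral.integral_sub ((hg.mono_set hsub).intervalIntegrable)
          (((hG i).mono_set hsub).intervalIntegrable)]
    _ ≤ δ * |t - a| := intervalIntegral.norm_integral_le_of_norm_le_const hbound
    _ ≤ δ * |b - a| := by gcongr
    _ < ε := by
        rw [div_mul_eq_mul_div, div_lt_iff₀ (by positivity)]
        nlinarith [abs_nonneg (b - a)]

end Primitive

theorem ContDiffOn.continuousOn_of_hasDerivWithinAt {𝕜 F : Type*} [NontriviallyNormedField 𝕜]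
    [NormedAddCommGroup F] [NormedSpace 𝕜 F] {g g' : 𝕜 → F} {s : Set 𝕜}
    (hg : ContDiffOn 𝕜 1 g s) (hs : UniqueDiffOn 𝕜 s)
    (hg' : ∀ t ∈ s, HasDerivWithinAt g (g' t) s t) : ContinuousOn g' s :=
  (hg.continuousOn_derivWithin hs le_rfl).congr fun t ht => ((hg' t ht).derivWithin (hs t ht)).symm

/-- The right-hand side of the recursion for `Φ_j[u]`, with `P j k` standing for the product
`∏_{l=1}^{k} f_{j+1-l}` and `D j k` for its derivative. -/
noncomputable def phiRecursion (P D : ℕ → ℕ → ℝ → ℝ) (u : ℝ → ℝ) (φ : ℕ → ℝ → ℝ) (j : ℕ)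
    (t : ℝ) : ℝ :=
  (∑ k ∈ Finset.Icc 1 j,
      (-1 : ℝ) ^ (k + 1) * φ (j - k) t * (u t ^ k / (Nat.factorial k : ℝ)) * P j k t)
    + ∑ k ∈ Finset.Icc 1 j,
      (-1 : ℝ) ^ k * ∫ s in (0:ℝ)..t, φ (j - k) s * (u s ^ k / (Nat.factorial k : ℝ)) * D j k s

section Recursion

variable {T : ℝ} {P D : ℕ → ℕ → ℝ → ℝ} {j : ℕ}

theorem continuousOn_phiRecursion {u : ℝ → ℝ} {φ : ℕ → ℝ → ℝ} (hu : ContinuousOn u (Icc 0 T))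
    (hφ : ∀ k ∈ Finset.Icc 1 j, ContinuousOn (φ (j - k)) (Icc 0 T))
    (hP : ∀ k ∈ Finset.Icc 1 j, ContinuousOn (P j k) (Icc 0 T))
    (hD : ∀ k ∈ Finset.Icc 1 j, ContinuousOn (D j k) (Icc 0 T)) :
    ContinuousOn (phiRecursion P D u φ j) (Icc 0 T) := by
  refine (continuousOn_finsetSum _ fun k hk => ?_).add (continuousOn_finsetSum _ fun k hk => ?_)
  · have := hφ k hk; have := hP k hk; fun_prop
  · have := hφ k hk; have := hD k hk
    exact continuousOn_const.mul (ContinuousOn.continuousOn_primitive (by fun_prop))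

theorem tendstoUniformlyOn_phiRecursion {ι : Type*} {l : Filter ι} {us : ι → ℝ → ℝ} {u : ℝ → ℝ}
    {φs : ι → ℕ → ℝ → ℝ} {φ : ℕ → ℝ → ℝ}
    (hus : ∀ i, ContinuousOn (us i) (Icc 0 T)) (hu : ContinuousOn u (Icc 0 T))
    (hconv : TendstoUniformlyOn us u l (Icc 0 T))
    (hφs : ∀ i, ∀ k ∈ Finset.Icc 1 j, ContinuousOn (φs i (j - k)) (Icc 0 T))
    (hφ : ∀ k ∈ Finset.Icc 1 j, ContinuousOn (φ (j - k)) (Icc 0 T))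
    (hφconv : ∀ k ∈ Finset.Icc 1 j,
      TendstoUniformlyOn (fun i => φs i (j - k)) (φ (j - k)) l (Icc 0 T))
    (hP : ∀ k ∈ Finset.Icc 1 j, ContinuousOn (P j k) (Icc 0 T))
    (hD : ∀ k ∈ Finset.Icc 1 j, ContinuousOn (D j k) (Icc 0 T)) :
    TendstoUniformlyOn (fun i => phiRecursion P D (us i) (φs i) j) (phiRecursion P D u φ j) l
      (Icc 0 T) := by
  have hK : IsCompact (Icc (0:ℝ) T) := isCompact_Icc
  have hterm {F : ι → ℝ → ℝ} {g Q : ℝ → ℝ} (hF : TendstoUniformlyOn F g l (Icc 0 T))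
      (hg : ContinuousOn g (Icc 0 T)) (hQ : ContinuousOn Q (Icc 0 T)) (k : ℕ) :
      TendstoUniformlyOn (fun i t => F i t * (us i t ^ k / (Nat.factorial k : ℝ)) * Q t)
        (fun t => g t * (u t ^ k / (Nat.factorial k : ℝ)) * Q t) l (Icc 0 T) := by
    have hweight := (uniformContinuous_div_const' (Nat.factorial k : ℝ)).comp_tendstoUniformlyOn
      (hconv.pow_of_continuousOn hK hu k)
    exact (hF.mul_of_continuousOn hK hweight hg (by fun_prop)).mul_of_continuousOn hK
      (tendstoUniformlyOn_const Q) (by fun_prop) hQ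
  refine (tendstoUniformlyOn_finsetSum _ fun k hk => ?_).fun_add
    (tendstoUniformlyOn_finsetSum _ fun k hk => ?_)
  · exact hterm ((hφconv k hk).const_mul _) (continuousOn_const.mul (hφ k hk)) (hP k hk) k
  · have := hφ k hk; have := hD k hk
    refine TendstoUniformlyOn.const_mul (TendstoUniformlyOn.primitive (fun i => ?_) ?_
      (hterm (hφconv k hk) (hφ k hk) (hD k hk) k)) _
    · have := hφs i k hk; have := hus i; exact ContinuousOn.integrableOn_Icc (by fun_prop)
    · exact ContinuousOn.integrableOn_Icc (by fun_prop)

theorem continuousOn_of_eqOn_phiRecursion {n : ℕ} {u : ℝ → ℝ} {Φu : ℕ → ℝ → ℝ}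
    (hu : ContinuousOn u (Icc 0 T))
    (hP : ∀ j ≤ n, ∀ k ∈ Finset.Icc 1 j, ContinuousOn (P j k) (Icc 0 T))
    (hD : ∀ j ≤ n, ∀ k ∈ Finset.Icc 1 j, ContinuousOn (D j k) (Icc 0 T))
    (h0 : ContinuousOn (Φu 0) (Icc 0 T))
    (hrec : ∀ j, 1 ≤ j → j ≤ n → EqOn (Φu j) (phiRecursion P D u Φu j) (Icc 0 T)) :
    ∀ j ≤ n, ContinuousOn (Φu j) (Icc 0 T) := by
  intro j
  induction j using Nat.strong_induction_on with
  | _ j ih =>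
    intro hjn
    rcases Nat.eq_zero_or_pos j with rfl | hj
    · exact h0
    refine (continuousOn_phiRecursion hu (fun k hk => ?_) (hP j hjn) (hD j hjn)).congr
      (hrec j hj hjn)
    have := Finset.mem_Icc.1 hk
    exact ih (j - k) (by omega) (by omega)

theorem tendstoUniformlyOn_of_eqOn_phiRecursion {n : ℕ} {ι : Type*} {l : Filter ι}
    {us : ι → ℝ → ℝ} {u : ℝ → ℝ} {Φs : ι → ℕ → ℝ → ℝ} {Φu : ℕ → ℝ → ℝ}
    (hus : ∀ i, ContinuousOn (us i) (Icc 0 T)) (hu : ContinuousOn u (Icc 0 T))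
    (hconv : TendstoUniformlyOn us u l (Icc 0 T))
    (hΦs : ∀ i, ∀ j ≤ n, ContinuousOn (Φs i j) (Icc 0 T))
    (hΦu : ∀ j ≤ n, ContinuousOn (Φu j) (Icc 0 T))
    (hP : ∀ j ≤ n, ∀ k ∈ Finset.Icc 1 j, ContinuousOn (P j k) (Icc 0 T))
    (hD : ∀ j ≤ n, ∀ k ∈ Finset.Icc 1 j, ContinuousOn (D j k) (Icc 0 T))
    (h0 : TendstoUniformlyOn (fun i => Φs i 0) (Φu 0) l (Icc 0 T))
    (hrecs : ∀ i, ∀ j, 1 ≤ j → j ≤ n →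
      EqOn (Φs i j) (phiRecursion P D (us i) (Φs i) j) (Icc 0 T))
    (hrec : ∀ j, 1 ≤ j → j ≤ n → EqOn (Φu j) (phiRecursion P D u Φu j) (Icc 0 T)) :
    ∀ j ≤ n, TendstoUniformlyOn (fun i => Φs i j) (Φu j) l (Icc 0 T) := by
  intro j
  induction j using Nat.strong_induction_on with
  | _ j ih =>
    intro hjn
    rcases Nat.eq_zero_or_pos j with rfl | hj
    · exact h0
    have hlt : ∀ k ∈ Finset.Icc 1 j, j - k < j ∧ j - k ≤ n := fun k hk => by
      have := Finset.mem_Icc.1 hk; omega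
    refine ((tendstoUniformlyOn_phiRecursion hus hu hconv
      (fun i k hk => hΦs i _ (hlt k hk).2) (fun k hk => hΦu _ (hlt k hk).2)
      (fun k hk => ih _ (hlt k hk).1 (hlt k hk).2) (hP j hjn) (hD j hjn)).congr ?_).congr_right ?_
    · exact Eventually.of_forall fun i t ht => (hrecs i j hj hjn ht).symm
    · exact fun t ht => (hrec j hj hjn ht).symm

end Recursion

theorem stmt6_general
    (T : ℝ) (hT : 0 < T) (n : ℕ)
    (f : ℕ → ℝ → ℝ)
    (hf : ∀ i, 1 ≤ i → i ≤ n → ContDiffOn ℝ 1 (f i) (Set.Icc 0 T))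
    (fd : ℕ → ℕ → ℝ → ℝ)
    (hfd : ∀ j k, 1 ≤ k → k ≤ j → j ≤ n → ∀ t ∈ Set.Icc (0:ℝ) T,
      HasDerivWithinAt (fun s => ∏ l ∈ Finset.Icc 1 k, f (j + 1 - l) s)
        (fd j k t) (Set.Icc 0 T) t)
    (Φ : (ℝ → ℝ) → ℕ → ℝ → ℝ)
    (hΦ0 : ∀ u t, Φ u 0 t = 1)
    (hΦ : ∀ u : ℝ → ℝ, ContinuousOn u (Set.Icc 0 T) →
      ∀ j, 1 ≤ j → j ≤ n → ∀ t ∈ Set.Icc (0:ℝ) T,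
      Φ u j t
        = (∑ k ∈ Finset.Icc 1 j,
            (-1 : ℝ) ^ (k + 1) * Φ u (j - k) t
              * (u t ^ k / (Nat.factorial k : ℝ))
              * ∏ l ∈ Finset.Icc 1 k, f (j + 1 - l) t)
        + ∑ k ∈ Finset.Icc 1 j,
            (-1 : ℝ) ^ k *
              ∫ s in (0:ℝ)..t,
                Φ u (j - k) s * (u s ^ k / (Nat.factorial k : ℝ)) * fd j k s)
    (ws : ℕ → ℝ → ℝ) (hws : ∀ j, ContinuousOn (ws j) (Set.Icc 0 T))
    (w : ℝ → ℝ) (hw : ContinuousOn w (Set.Icc 0 T))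
    (hconv : TendstoUniformlyOn ws w atTop (Set.Icc 0 T)) :
    TendstoUniformlyOn (fun j => Φ (ws j) n) (Φ w n) atTop (Set.Icc 0 T) := by
  have hprod : ∀ j ≤ n, ∀ k ∈ Finset.Icc 1 j,
      ContDiffOn ℝ 1 (fun t => ∏ l ∈ Finset.Icc 1 k, f (j + 1 - l) t) (Icc 0 T) := by
    intro j hj k hk
    refine contDiffOn_prod fun l hl => hf _ ?_ ?_ <;>
      · have := Finset.mem_Icc.1 hk; have := Finset.mem_Icc.1 hl; omega
  have hP := fun j hj k hk => (hprod j hj k hk).continuousOn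
  have hD : ∀ j ≤ n, ∀ k ∈ Finset.Icc 1 j, ContinuousOn (fd j k) (Icc 0 T) := fun j hj k hk =>
    have := Finset.mem_Icc.1 hk
    (hprod j hj k hk).continuousOn_of_hasDerivWithinAt (uniqueDiffOn_Icc hT)
      (hfd j k this.1 this.2 hj)
  have hΦ0' (u : ℝ → ℝ) : Φ u 0 = fun _ => 1 := funext (hΦ0 u)
  have hcont (u : ℝ → ℝ) (hu : ContinuousOn u (Icc 0 T)) :
      ∀ j ≤ n, ContinuousOn (Φ u j) (Icc 0 T) :=
    continuousOn_of_eqOn_phiRecursion hu hP hD (hΦ0' u ▸ continuousOn_const) (hΦ u hu)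
  refine tendstoUniformlyOn_of_eqOn_phiRecursion hws hw hconv (fun i => hcont _ (hws i))
    (hcont w hw) hP hD ?_ (fun i => hΦ _ (hws i)) (hΦ w hw) n le_rfl
  simpa only [hΦ0'] using tendstoUniformlyOn_const _

/-- Deterministic stability (uniform version): if `w_j → w` uniformly on
`[0,T]`, then `Φ_n[w_j] → Φ_n[w]` uniformly on `[0,T]`. -/
theorem stmt6
    (T : ℝ) (hT : 0 < T) (n : ℕ) (hn : 1 ≤ n)
    (f : ℕ → ℝ → ℝ)
    (hf : ∀ i, 1 ≤ i → i ≤ n → ContDiffOn ℝ 1 (f i) (Set.Icc 0 T))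
    (fd : ℕ → ℕ → ℝ → ℝ)
    (hfd : ∀ j k, 1 ≤ k → k ≤ j → j ≤ n → ∀ t ∈ Set.Icc (0:ℝ) T,
      HasDerivWithinAt (fun s => ∏ l ∈ Finset.Icc 1 k, f (j + 1 - l) s)
        (fd j k t) (Set.Icc 0 T) t)
    (Φ : (ℝ → ℝ) → ℕ → ℝ → ℝ)
    (hΦ0 : ∀ u t, Φ u 0 t = 1)
    (hΦ : ∀ u : ℝ → ℝ, ContinuousOn u (Set.Icc 0 T) →
      ∀ j, 1 ≤ j → j ≤ n → ∀ t ∈ Set.Icc (0:ℝ) T,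
      Φ u j t
        = (∑ k ∈ Finset.Icc 1 j,
            (-1 : ℝ) ^ (k + 1) * Φ u (j - k) t
              * (u t ^ k / (Nat.factorial k : ℝ))
              * ∏ l ∈ Finset.Icc 1 k, f (j + 1 - l) t)
        + ∑ k ∈ Finset.Icc 1 j,
            (-1 : ℝ) ^ k *
              ∫ s in (0:ℝ)..t,
                Φ u (j - k) s * (u s ^ k / (Nat.factorial k : ℝ)) * fd j k s)
    (ws : ℕ → ℝ → ℝ) (hws : ∀ j, ContinuousOn (ws j) (Set.Icc 0 T))
    (w : ℝ → ℝ) (hw : ContinuousOn w (Set.Icc 0 T))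
    (hconv : TendstoUniformlyOn ws w atTop (Set.Icc 0 T)) :
    TendstoUniformlyOn (fun j => Φ (ws j) n) (Φ w n) atTop (Set.Icc 0 T) :=
  stmt6_general T hT n f hf fd hfd Φ hΦ0 hΦ ws hws w hw hconv
end

section
/- Let (w_j)_{j≥1} and w be continuous real-valued functions on [0,T] such that w_j(t) → w(t) as j → ∞ for every t ∈ [0,T], and such that there exists K > 0 with |w_j(t)| ≤ K for all j ≥ 1 and all t ∈ [0,T]. Then Φ_n[w_j](t) → Φ_n[w](t) as j → ∞ for every t ∈ [0,T]. -/
/-!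
Sequences of functions continuous on `[0,T]`, bounded there uniformly in the index and
converging pointwise, are closed under sums, products, powers and primitives `t ↦ ∫_0^t`
(the last by dominated convergence). By strong induction on `j`, `Φ_j[w_i]` is obtained from
`w_i`, the `Φ_{j-k}[w_i]` and fixed continuous functions by these operations, so
`Φ_j[w_i] → Φ_j[w]` pointwise.
-/

open MeasureTheory Filter Set

/-- Continuity of each `F i` is built in so that the primitives `t ↦ ∫ s in a..t, F i s` are
measurable integrands and again continuous. -/
structure TendstoBoundedlyOn (F : ℕ → ℝ → ℝ) (f : ℝ → ℝ) (S : Set ℝ) : Prop where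
  continuousOn : ∀ i, ContinuousOn (F i) S
  bdd : ∃ C, ∀ i, ∀ t ∈ S, |F i t| ≤ C
  tendsto : ∀ t ∈ S, Tendsto (fun i => F i t) atTop (nhds (f t))

namespace TendstoBoundedlyOn

variable {F G : ℕ → ℝ → ℝ} {f g : ℝ → ℝ} {S : Set ℝ}

theorem congr (hF : TendstoBoundedlyOn F f S) (hFG : ∀ i, EqOn (F i) (G i) S)
    (hfg : EqOn f g S) : TendstoBoundedlyOn G g S where
  continuousOn i := (hF.continuousOn i).congr fun _ ht => (hFG i ht).symm
  bdd := by
    obtain ⟨C, hC⟩ := hF.bdd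
    exact ⟨C, fun i t ht => hFG i ht ▸ hC i t ht⟩
  tendsto t ht := by
    simpa only [hFG _ ht, hfg ht] using hF.tendsto t ht

theorem const (hS : IsCompact S) (hf : ContinuousOn f S) :
    TendstoBoundedlyOn (fun _ => f) f S where
  continuousOn _ := hf
  bdd := by
    obtain ⟨C, hC⟩ := hS.exists_bound_of_continuousOn hf
    exact ⟨C, fun _ t ht => hC t ht⟩
  tendsto _ _ := tendsto_const_nhds

theorem add (hF : TendstoBoundedlyOn F f S) (hG : TendstoBoundedlyOn G g S) :
    TendstoBoundedlyOn (fun i t => F i t + G i t) (fun t => f t + g t) S where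
  continuousOn i := (hF.continuousOn i).add (hG.continuousOn i)
  bdd := by
    obtain ⟨C, hC⟩ := hF.bdd
    obtain ⟨D, hD⟩ := hG.bdd
    exact ⟨C + D, fun i t ht => (abs_add_le _ _).trans (add_le_add (hC i t ht) (hD i t ht))⟩
  tendsto t ht := (hF.tendsto t ht).add (hG.tendsto t ht)

theorem mul (hF : TendstoBoundedlyOn F f S) (hG : TendstoBoundedlyOn G g S) :
    TendstoBoundedlyOn (fun i t => F i t * G i t) (fun t => f t * g t) S where
  continuousOn i := (hF.continuousOn i).mul (hG.continuousOn i)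
  bdd := by
    obtain ⟨C, hC⟩ := hF.bdd
    obtain ⟨D, hD⟩ := hG.bdd
    refine ⟨C * D, fun i t ht => ?_⟩
    rw [abs_mul]
    exact mul_le_mul (hC i t ht) (hD i t ht) (abs_nonneg _) ((abs_nonneg _).trans (hC i t ht))
  tendsto t ht := (hF.tendsto t ht).mul (hG.tendsto t ht)

theorem const_mul (hF : TendstoBoundedlyOn F f S) (c : ℝ) :
    TendstoBoundedlyOn (fun i t => c * F i t) (fun t => c * f t) S where
  continuousOn i := (hF.continuousOn i).const_smul c
  bdd := by
    obtain ⟨C, hC⟩ := hF.bdd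
    refine ⟨|c| * C, fun i t ht => ?_⟩
    rw [abs_mul]
    exact mul_le_mul_of_nonneg_left (hC i t ht) (abs_nonneg c)
  tendsto t ht := (hF.tendsto t ht).const_mul c

theorem pow (hF : TendstoBoundedlyOn F f S) (k : ℕ) :
    TendstoBoundedlyOn (fun i t => F i t ^ k) (fun t => f t ^ k) S where
  continuousOn i := (hF.continuousOn i).pow k
  bdd := by
    obtain ⟨C, hC⟩ := hF.bdd
    refine ⟨C ^ k, fun i t ht => ?_⟩
    rw [abs_pow]
    exact pow_le_pow_left₀ (abs_nonneg _) (hC i t ht) k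
  tendsto t ht := (hF.tendsto t ht).pow k

theorem div_const (hF : TendstoBoundedlyOn F f S) (c : ℝ) :
    TendstoBoundedlyOn (fun i t => F i t / c) (fun t => f t / c) S where
  continuousOn i := (hF.continuousOn i).div_const c
  bdd := by
    obtain ⟨C, hC⟩ := hF.bdd
    refine ⟨C / |c|, fun i t ht => ?_⟩
    rw [abs_div]
    exact div_le_div_of_nonneg_right (hC i t ht) (abs_nonneg c)
  tendsto t ht := (hF.tendsto t ht).div_const c

theorem finset_sum {ι : Type*} (s : Finset ι) {F : ι → ℕ → ℝ → ℝ} {f : ι → ℝ → ℝ}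
    (h : ∀ k ∈ s, TendstoBoundedlyOn (F k) (f k) S) :
    TendstoBoundedlyOn (fun i t => ∑ k ∈ s, F k i t) (fun t => ∑ k ∈ s, f k t) S := by
  classical
  induction s using Finset.induction_on with
  | empty =>
    simp only [Finset.sum_empty]
    exact ⟨fun _ => continuousOn_const, ⟨0, by simp⟩, fun _ _ => tendsto_const_nhds⟩
  | insert a s ha ih =>
    simp only [Finset.sum_insert ha]
    exact (h a (Finset.mem_insert_self a s)).add
      (ih fun k hk => h k (Finset.mem_insert_of_mem hk))

theorem intervalIntegral {a b : ℝ} (hF : TendstoBoundedlyOn F f (uIcc a b)) :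
    TendstoBoundedlyOn (fun i t => ∫ s in a..t, F i s) (fun t => ∫ s in a..t, f s) (uIcc a b) where
  continuousOn i :=
    intervalIntegral.continuousOn_primitive_interval (hF.continuousOn i).integrableOn_uIcc
  bdd := by
    obtain ⟨C, hC⟩ := hF.bdd
    refine ⟨C * |b - a|, fun i t ht => ?_⟩
    have hsub : uIoc a t ⊆ uIcc a b := uIoc_subset_uIcc.trans (uIcc_subset_uIcc_left ht)
    calc ‖∫ s in a..t, F i s‖
        ≤ C * |t - a| :=
          intervalIntegral.norm_integral_le_of_norm_le_const fun s hs => hC i s (hsub hs)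
      _ ≤ C * |b - a| :=
          mul_le_mul_of_nonneg_left (abs_sub_left_of_mem_uIcc ht)
            ((abs_nonneg _).trans (hC i t ht))
  tendsto t ht := by
    obtain ⟨C, hC⟩ := hF.bdd
    have hsub : uIoc a t ⊆ uIcc a b := uIoc_subset_uIcc.trans (uIcc_subset_uIcc_left ht)
    exact intervalIntegral.tendsto_integral_filter_of_dominated_convergence (fun _ => C)
      (.of_forall fun i => ((hF.continuousOn i).mono hsub).aestronglyMeasurable measurableSet_uIoc)
      (.of_forall fun i => ae_of_all _ fun s hs => hC i s (hsub hs))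
      intervalIntegrable_const
      (ae_of_all _ fun s hs => hF.tendsto s (hsub hs))

end TendstoBoundedlyOn

/-- The right-hand side of the recursion for `Φ_j[u]`, with `Ψ` in place of `Φ_·[u]`, `P k` in
place of `∏_{l ≤ k} f_{j+1-l}` and `D k` in place of its derivative. -/
noncomputable def phiRHS (Ψ : ℕ → ℝ → ℝ) (u : ℝ → ℝ) (P D : ℕ → ℝ → ℝ) (j : ℕ) (t : ℝ) : ℝ :=
  (∑ k ∈ Finset.Icc 1 j,
      (-1 : ℝ) ^ (k + 1) * Ψ (j - k) t * (u t ^ k / (Nat.factorial k : ℝ)) * P k t)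
    + ∑ k ∈ Finset.Icc 1 j,
      (-1 : ℝ) ^ k * ∫ s in (0:ℝ)..t, Ψ (j - k) s * (u s ^ k / (Nat.factorial k : ℝ)) * D k s

theorem TendstoBoundedlyOn.phiRHS {T : ℝ} (hT : 0 ≤ T) {Ψ : ℕ → ℕ → ℝ → ℝ} {ψ : ℕ → ℝ → ℝ}
    {U : ℕ → ℝ → ℝ} {u : ℝ → ℝ} {P D : ℕ → ℝ → ℝ} {j : ℕ}
    (hU : TendstoBoundedlyOn U u (Icc 0 T))
    (hΨ : ∀ k ∈ Finset.Icc 1 j, TendstoBoundedlyOn (fun i => Ψ i (j - k)) (ψ (j - k)) (Icc 0 T))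
    (hP : ∀ k ∈ Finset.Icc 1 j, ContinuousOn (P k) (Icc 0 T))
    (hD : ∀ k ∈ Finset.Icc 1 j, ContinuousOn (D k) (Icc 0 T)) :
    TendstoBoundedlyOn (fun i => phiRHS (Ψ i) (U i) P D j) (phiRHS ψ u P D j) (Icc 0 T) := by
  rw [← uIcc_of_le hT] at *
  refine (finset_sum _ fun k hk => ?_).add (finset_sum _ fun k hk => ?_)
  · exact ((((hΨ k hk).const_mul _).mul ((hU.pow k).div_const _)).mul
      (const isCompact_uIcc (hP k hk)))
  · exact ((((hΨ k hk).mul ((hU.pow k).div_const _)).mul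
      (const isCompact_uIcc (hD k hk))).intervalIntegral).const_mul _

theorem stmt7_general
    (T : ℝ) (hT : 0 < T) (n : ℕ)
    (f : ℕ → ℝ → ℝ)
    (hf : ∀ i, 1 ≤ i → i ≤ n → ContDiffOn ℝ 1 (f i) (Set.Icc 0 T))
    (fd : ℕ → ℕ → ℝ → ℝ)
    (hfd : ∀ j k, 1 ≤ k → k ≤ j → j ≤ n → ∀ t ∈ Set.Icc (0:ℝ) T,
      HasDerivWithinAt (fun s => ∏ l ∈ Finset.Icc 1 k, f (j + 1 - l) s)
        (fd j k t) (Set.Icc 0 T) t)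
    (Φ : (ℝ → ℝ) → ℕ → ℝ → ℝ)
    (hΦ0 : ∀ u t, Φ u 0 t = 1)
    (hΦ : ∀ u : ℝ → ℝ, ContinuousOn u (Set.Icc 0 T) →
      ∀ j, 1 ≤ j → j ≤ n → ∀ t ∈ Set.Icc (0:ℝ) T,
      Φ u j t
        = (∑ k ∈ Finset.Icc 1 j,
            (-1 : ℝ) ^ (k + 1) * Φ u (j - k) t
              * (u t ^ k / (Nat.factorial k : ℝ))
              * ∏ l ∈ Finset.Icc 1 k, f (j + 1 - l) t)
        + ∑ k ∈ Finset.Icc 1 j,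
            (-1 : ℝ) ^ k *
              ∫ s in (0:ℝ)..t,
                Φ u (j - k) s * (u s ^ k / (Nat.factorial k : ℝ)) * fd j k s)
    (ws : ℕ → ℝ → ℝ) (hws : ∀ j, ContinuousOn (ws j) (Set.Icc 0 T))
    (w : ℝ → ℝ) (hw : ContinuousOn w (Set.Icc 0 T))
    (hconv : ∀ t ∈ Set.Icc (0:ℝ) T,
      Tendsto (fun j => ws j t) atTop (nhds (w t)))
    (K : ℝ)
    (hbound : ∀ j, ∀ t ∈ Set.Icc (0:ℝ) T, |ws j t| ≤ K) :
    ∀ t ∈ Set.Icc (0:ℝ) T,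
      Tendsto (fun j => Φ (ws j) n t) atTop (nhds (Φ w n t)) := by
  have hP : ∀ j ≤ n, ∀ k ∈ Finset.Icc 1 j,
      ContDiffOn ℝ 1 (fun s => ∏ l ∈ Finset.Icc 1 k, f (j + 1 - l) s) (Icc 0 T) :=
    fun j hj k hk => contDiffOn_prod fun l hl =>
      hf _ (by grind) (by grind)
  have hD : ∀ j ≤ n, ∀ k ∈ Finset.Icc 1 j, ContinuousOn (fd j k) (Icc 0 T) :=
    fun j hj k hk => (hP j hj k hk).continuousOn_of_hasDerivWithinAt (uniqueDiffOn_Icc hT)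
      (hfd j k (Finset.mem_Icc.1 hk).1 (Finset.mem_Icc.1 hk).2 hj)
  have hU : TendstoBoundedlyOn ws w (Icc 0 T) := ⟨hws, ⟨K, hbound⟩, hconv⟩
  have key : ∀ j ≤ n, TendstoBoundedlyOn (fun i => Φ (ws i) j) (Φ w j) (Icc 0 T) := by
    intro j
    induction j using Nat.strong_induction_on with | _ j ih =>
    intro hj
    rcases Nat.eq_zero_or_pos j with rfl | hj1
    · exact (TendstoBoundedlyOn.const isCompact_Icc continuousOn_const).congr
        (fun i t _ => (hΦ0 (ws i) t).symm) (fun t _ => (hΦ0 w t).symm)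
    · have hΨ : ∀ k ∈ Finset.Icc 1 j,
          TendstoBoundedlyOn (fun i => Φ (ws i) (j - k)) (Φ w (j - k)) (Icc 0 T) :=
        fun k hk => ih (j - k) (by grind) (by omega)
      exact (hU.phiRHS hT.le hΨ (fun k hk => (hP j hj k hk).continuousOn) (hD j hj)).congr
        (fun i t ht => (hΦ (ws i) (hws i) j hj1 hj t ht).symm)
        (fun t ht => (hΦ w hw j hj1 hj t ht).symm)
  exact (key n le_rfl).tendsto

/-- Deterministic stability (pointwise version, hypotheses (H2)-(H3)): if
`w_j(t) → w(t)` for every `t ∈ [0,T]` and the `w_j` are uniformly bounded by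
`K` on `[0,T]`, then `Φ_n[w_j](t) → Φ_n[w](t)` for every `t ∈ [0,T]`. -/
theorem stmt7
    (T : ℝ) (hT : 0 < T) (n : ℕ) (hn : 1 ≤ n)
    (f : ℕ → ℝ → ℝ)
    (hf : ∀ i, 1 ≤ i → i ≤ n → ContDiffOn ℝ 1 (f i) (Set.Icc 0 T))
    (fd : ℕ → ℕ → ℝ → ℝ)
    (hfd : ∀ j k, 1 ≤ k → k ≤ j → j ≤ n → ∀ t ∈ Set.Icc (0:ℝ) T,
      HasDerivWithinAt (fun s => ∏ l ∈ Finset.Icc 1 k, f (j + 1 - l) s)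
        (fd j k t) (Set.Icc 0 T) t)
    (Φ : (ℝ → ℝ) → ℕ → ℝ → ℝ)
    (hΦ0 : ∀ u t, Φ u 0 t = 1)
    (hΦ : ∀ u : ℝ → ℝ, ContinuousOn u (Set.Icc 0 T) →
      ∀ j, 1 ≤ j → j ≤ n → ∀ t ∈ Set.Icc (0:ℝ) T,
      Φ u j t
        = (∑ k ∈ Finset.Icc 1 j,
            (-1 : ℝ) ^ (k + 1) * Φ u (j - k) t
              * (u t ^ k / (Nat.factorial k : ℝ))
              * ∏ l ∈ Finset.Icc 1 k, f (j + 1 - l) t)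
        + ∑ k ∈ Finset.Icc 1 j,
            (-1 : ℝ) ^ k *
              ∫ s in (0:ℝ)..t,
                Φ u (j - k) s * (u s ^ k / (Nat.factorial k : ℝ)) * fd j k s)
    (ws : ℕ → ℝ → ℝ) (hws : ∀ j, ContinuousOn (ws j) (Set.Icc 0 T))
    (w : ℝ → ℝ) (hw : ContinuousOn w (Set.Icc 0 T))
    (hconv : ∀ t ∈ Set.Icc (0:ℝ) T,
      Tendsto (fun j => ws j t) atTop (nhds (w t)))
    (K : ℝ) (hK : 0 < K)
    (hbound : ∀ j, ∀ t ∈ Set.Icc (0:ℝ) T, |ws j t| ≤ K) :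
    ∀ t ∈ Set.Icc (0:ℝ) T,
      Tendsto (fun j => Φ (ws j) n t) atTop (nhds (Φ w n t)) :=
  stmt7_general T hT n f hf fd hfd Φ hΦ0 hΦ ws hws w hw hconv K hbound
end
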